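/- arXiv:1610.02072 — 2 statements merged into one kernel-verified Lean document; each statement's English description precedes it below -/
import Mathlib

section
/- (One-step EXP potential inequality.) Let x₁, x_t ∈ ℝⁿ_{>0}, let L_t ∈ ℝⁿ with η_t L_{t,i} ≥ −1 for all i, let 0 < η_{t+1} ≤ η_t, and define x̃_{t+1,i} = x_{1,i}^{1−η_{t+1}/η_t} x_{t,i}^{η_{t+1}/η_t} exp(−η_{t+1} L_{t,i}). Then for every y ∈ ℝⁿ_{≥0}: D(y, x̃_{t+1})/η_{t+1} − D(y, x_t)/η_t + (1/η_t − 1/η_{t+1}) D(y, x₁) ≤ −L_tᵀ x_t + (e−2) η_t ∑_{i=1}^{n} x_{t,i} L_{t,i}² + L_tᵀ y. -/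
noncomputable def KL {n : ℕ} (u v : Fin n → ℝ) : ℝ :=
  ∑ i, u i * Real.log (u i / v i) - ∑ i, u i + ∑ i, v i

/-!
Coordinatewise, with `a = η_{t+1}/η_t` one has `log x̃ = (1 - a) log x₁ + a log x_t - η_{t+1} L`,
so the `y log y` and `y log x` terms of the three divergences cancel and the left side equals
`Lᵀy` plus the mass terms `x̃/η_{t+1} - x_t/η_t + (1/η_t - 1/η_{t+1}) x₁`, whatever `y` is.
Weighted AM-GM gives `x̃ ≤ (1 - a) x₁ + a x_t exp(-η_t L)`, and `exp b ≤ 1 + b + (e - 2) b²`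
for `b = -η_t L ≤ 1` bounds the mass terms by the first two terms of the right side.
-/

open Real Finset
open scoped Nat

namespace Real

theorem exp_le_one_add_add_sq_div_two_of_nonpos {b : ℝ} (hb : b ≤ 0) :
    exp b ≤ 1 + b + b ^ 2 / 2 := by
  have hlow : 1 + -b + (-b) ^ 2 / 2 ≤ exp (-b) := quadratic_le_exp_of_nonneg (neg_nonneg.2 hb)
  have hpos : 0 < 1 + -b + (-b) ^ 2 / 2 := by nlinarith
  -- `(1 + b + b²/2)(1 - b + b²/2) = 1 + b⁴/4 ≥ 1`
  calc exp b = (exp (-b))⁻¹ := by rw [exp_neg, inv_inv]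
    _ ≤ (1 + -b + (-b) ^ 2 / 2)⁻¹ := inv_anti₀ hpos hlow
    _ ≤ 1 + b + b ^ 2 / 2 := by
      rw [inv_le_iff_one_le_mul₀ hpos]
      nlinarith [pow_nonneg (sq_nonneg b) 2]

theorem exp_le_one_add_add_mul_sq_of_nonneg {b : ℝ} (h0 : 0 ≤ b) (h1 : b ≤ 1) :
    exp b ≤ 1 + b + (exp 1 - 2) * b ^ 2 := by
  have tail (x : ℝ) : HasSum (fun n ↦ x ^ (n + 2) / (n + 2)!) (exp x - 1 - x) := by
    have := (hasSum_nat_add_iff' 2).mpr (exp_eq_exp_ℝ ▸ NormedSpace.expSeries_div_hasSum_exp x)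
    simpa [sum_range_succ, sub_sub] using this
  -- compare the tail series at `b` termwise with `b²` times the tail at `1`, which sums to `e - 2`
  have := hasSum_le (fun n ↦ ?_) (tail b) ((tail 1).mul_left (b ^ 2))
  · linarith
  · rw [one_pow, mul_one_div, pow_add, mul_comm]
    gcongr
    exact mul_le_of_le_one_right (sq_nonneg b) (pow_le_one₀ h0 h1)

theorem exp_le_one_add_add_mul_sq {b : ℝ} (hb : b ≤ 1) :
    exp b ≤ 1 + b + (exp 1 - 2) * b ^ 2 := by
  rcases le_total 0 b with h0 | h0
  · exact exp_le_one_add_add_mul_sq_of_nonneg h0 hb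
  · have : 1 / 2 ≤ exp 1 - 2 := by linarith [exp_one_gt_d9]
    nlinarith [exp_le_one_add_add_sq_div_two_of_nonpos h0, sq_nonneg b]

end Real

noncomputable def klTerm (u v : ℝ) : ℝ := u * log (u / v) - u + v

theorem KL_eq_sum_klTerm {n : ℕ} (u v : Fin n → ℝ) : KL u v = ∑ i, klTerm (u i) (v i) := by
  simp only [KL, klTerm, sum_add_distrib, sum_sub_distrib]

theorem mul_log_div_eq_sub (u : ℝ) {v : ℝ} (hv : 0 < v) :
    u * log (u / v) = u * log u - u * log v := by
  rcases eq_or_ne u 0 with rfl | hu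
  · simp
  · rw [log_div hu hv.ne', mul_sub]

theorem log_rpow_mul_rpow_mul_exp {x₁ x : ℝ} (hx₁ : 0 < x₁) (hx : 0 < x) (a c : ℝ) :
    log (x₁ ^ (1 - a) * x ^ a * exp c) = (1 - a) * log x₁ + a * log x + c := by
  rw [log_mul (by positivity) (exp_ne_zero c), log_mul (by positivity) (by positivity),
    log_rpow hx₁, log_rpow hx, log_exp]

theorem rpow_mul_rpow_mul_exp_le {x₁ x a : ℝ} (hx₁ : 0 ≤ x₁) (hx : 0 ≤ x) (ha₀ : 0 ≤ a)
    (ha₁ : a ≤ 1) (c : ℝ) :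
    x₁ ^ (1 - a) * x ^ a * exp (a * c) ≤ (1 - a) * x₁ + a * (x * exp c) := by
  have hexp : x ^ a * exp (a * c) = (x * exp c) ^ a := by
    rw [mul_rpow hx (exp_pos c).le, ← exp_mul, mul_comm c]
  rw [mul_assoc, hexp]
  exact geom_mean_le_arith_mean2_weighted (by linarith) ha₀ hx₁ (by positivity) (by ring)

section OneStep

variable {x₁ x L η η' x' : ℝ}

theorem klTerm_one_step_eq (hx₁ : 0 < x₁) (hx : 0 < x) (hη : η ≠ 0) (hη' : η' ≠ 0)
    (hx' : x' = x₁ ^ (1 - η' / η) * x ^ (η' / η) * exp (-η' * L)) (y : ℝ) :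
    klTerm y x' / η' - klTerm y x / η + (1 / η - 1 / η') * klTerm y x₁
      = L * y + (x' / η' - x / η + (1 / η - 1 / η') * x₁) := by
  have hlog : log x' = (1 - η' / η) * log x₁ + η' / η * log x + -η' * L := by
    rw [hx', log_rpow_mul_rpow_mul_exp hx₁ hx]
  have hx'_pos : 0 < x' := by rw [hx']; positivity
  simp only [klTerm, mul_log_div_eq_sub y hx, mul_log_div_eq_sub y hx₁,
    mul_log_div_eq_sub y hx'_pos, hlog]
  field_simp
  ring

theorem one_step_mass_le (hx₁ : 0 ≤ x₁) (hx : 0 ≤ x) (hη' : 0 < η') (hle : η' ≤ η)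
    (hL : -1 ≤ η * L) (hx' : x' = x₁ ^ (1 - η' / η) * x ^ (η' / η) * exp (-η' * L)) :
    x' / η' - x / η + (1 / η - 1 / η') * x₁ ≤ -(L * x) + (exp 1 - 2) * η * (x * L ^ 2) := by
  have hη : 0 < η := hη'.trans_le hle
  set a := η' / η
  have ha₀ : 0 ≤ a := by positivity
  have ha₁ : a ≤ 1 := div_le_one_of_le₀ hle hη.le
  have hx'_le : x' ≤ (1 - a) * x₁ + a * (x * (1 + -(η * L) + (exp 1 - 2) * (-(η * L)) ^ 2)) := by
    calc x' = x₁ ^ (1 - a) * x ^ a * exp (a * -(η * L)) := by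
          rw [hx']; congr 2; simp only [a]; field_simp
      _ ≤ (1 - a) * x₁ + a * (x * exp (-(η * L))) :=
          rpow_mul_rpow_mul_exp_le hx₁ hx ha₀ ha₁ _
      _ ≤ _ := by gcongr; exact exp_le_one_add_add_mul_sq (by linarith)
  have key : ((1 - a) * x₁ + a * (x * (1 + -(η * L) + (exp 1 - 2) * (-(η * L)) ^ 2))) / η'
      - x / η + (1 / η - 1 / η') * x₁ = -(L * x) + (exp 1 - 2) * η * (x * L ^ 2) := by
    simp only [a]
    field_simp
    ring
  rw [← key]
  gcongr

theorem klTerm_one_step_le (hx₁ : 0 < x₁) (hx : 0 < x) (hη' : 0 < η') (hle : η' ≤ η)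
    (hL : -1 ≤ η * L) (hx' : x' = x₁ ^ (1 - η' / η) * x ^ (η' / η) * exp (-η' * L)) (y : ℝ) :
    klTerm y x' / η' - klTerm y x / η + (1 / η - 1 / η') * klTerm y x₁
      ≤ -(L * x) + (exp 1 - 2) * η * (x * L ^ 2) + L * y := by
  rw [klTerm_one_step_eq hx₁ hx (hη'.trans_le hle).ne' hη'.ne' hx']
  linarith [one_step_mass_le hx₁.le hx.le hη' hle hL hx']

end OneStep

theorem exp_one_step_potential_general (n : ℕ) (x₁ xt : Fin n → ℝ)
    (hx₁ : ∀ i, 0 < x₁ i) (hxt : ∀ i, 0 < xt i)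
    (L : Fin n → ℝ) (ηt ηt1 : ℝ) (hηt1 : 0 < ηt1) (hle : ηt1 ≤ ηt)
    (hL : ∀ i, -1 ≤ ηt * L i)
    (xtilde : Fin n → ℝ)
    (hxtilde : ∀ i, xtilde i
      = x₁ i ^ (1 - ηt1 / ηt) * xt i ^ (ηt1 / ηt) * Real.exp (-ηt1 * L i))
    (y : Fin n → ℝ) :
    KL y xtilde / ηt1 - KL y xt / ηt + (1 / ηt - 1 / ηt1) * KL y x₁
      ≤ -(∑ i, L i * xt i)
        + (Real.exp 1 - 2) * ηt * ∑ i, xt i * (L i) ^ 2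
        + ∑ i, L i * y i := by
  calc KL y xtilde / ηt1 - KL y xt / ηt + (1 / ηt - 1 / ηt1) * KL y x₁
      = ∑ i, (klTerm (y i) (xtilde i) / ηt1 - klTerm (y i) (xt i) / ηt
          + (1 / ηt - 1 / ηt1) * klTerm (y i) (x₁ i)) := by
        simp only [KL_eq_sum_klTerm, sum_div, mul_sum, ← sum_sub_distrib, ← sum_add_distrib]
    _ ≤ ∑ i, (-(L i * xt i) + (exp 1 - 2) * ηt * (xt i * L i ^ 2) + L i * y i) :=
        sum_le_sum fun i _ ↦ klTerm_one_step_le (hx₁ i) (hxt i) hηt1 hle (hL i) (hxtilde i) (y i)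
    _ = _ := by simp only [sum_add_distrib, sum_neg_distrib, mul_sum]

theorem exp_one_step_potential (n : ℕ) (x₁ xt : Fin n → ℝ)
    (hx₁ : ∀ i, 0 < x₁ i) (hxt : ∀ i, 0 < xt i)
    (L : Fin n → ℝ) (ηt ηt1 : ℝ) (hηt1 : 0 < ηt1) (hle : ηt1 ≤ ηt)
    (hL : ∀ i, -1 ≤ ηt * L i)
    (xtilde : Fin n → ℝ)
    (hxtilde : ∀ i, xtilde i
      = x₁ i ^ (1 - ηt1 / ηt) * xt i ^ (ηt1 / ηt) * Real.exp (-ηt1 * L i))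
    (y : Fin n → ℝ) (hy : ∀ i, 0 ≤ y i) :
    KL y xtilde / ηt1 - KL y xt / ηt + (1 / ηt - 1 / ηt1) * KL y x₁
      ≤ -(∑ i, L i * xt i)
        + (Real.exp 1 - 2) * ηt * ∑ i, xt i * (L i) ^ 2
        + ∑ i, L i * y i :=
  exp_one_step_potential_general n x₁ xt hx₁ hxt L ηt ηt1 hηt1 hle hL xtilde hxtilde y
end

section
/- (Regret bound of generalized EXP with approximate projections.) Let P ⊆ ℝⁿ_{>0} be convex, x₁ ∈ P, and let η₁ ≥ η₂ ≥ ⋯ ≥ η_T > 0 and loss vectors L_t ∈ ℝⁿ satisfy η_t L_{t,i} ≥ −1 for all t, i. Suppose the iterates x_{t+1} ∈ P satisfy D(z, x_{t+1}) ≤ D(z, x̃_{t+1}) + ε_t for all z ∈ P, where x̃_{t+1,i} = x_{1,i}^{1−η_{t+1}/η_t} x_{t,i}^{η_{t+1}/η_t} e^{−η_{t+1} L_{t,i}}. Then for every y ∈ P: ∑_{t=1}^{T} L_tᵀ x_t − ∑_{t=1}^{T} L_tᵀ y ≤ D(y, x₁)/η_T + ∑_{t=1}^{T−1} ε_t/η_{t+1}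 + (e−2) ∑_{t=1}^{T} η_t ∑_{i=1}^{n} x_{t,i} L_{t,i}². -/
/-!
Potential argument. Write `w_t = x_t · e^{-η_t L_t}` for the unprojected update and
`Φ_t = D(y, w_t) / η_t`. Since `e^z ≤ 1 + z + (e - 2) z²` for `z ≤ 1`,
`Φ_t ≤ D(y, x_t) / η_t - L_tᵀ (x_t - y) + (e - 2) η_t ∑ᵢ x_{t,i} L_{t,i}²`.
The target of the approximate projection is the weighted geometric mean
`x₁^{1-r} w_t^r` with `r = η_{t+1}/η_t`; `D(y, ·)` is convex along such means (the
logarithm is affine in them, and the mean is at most the arithmetic one), so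
`D(y, x_{t+1}) / η_{t+1} ≤ Φ_t + D(y, x₁) (1/η_{t+1} - 1/η_t) + ε_t / η_{t+1}`.
Summing over `t` telescopes, and `Φ_T ≥ 0`.
-/

open Finset Real
open scoped Nat

theorem Real.exp_le_one_add_add_mul_sq_of_abs_le_one {x : ℝ} (hx : |x| ≤ 1) :
    exp x ≤ 1 + x + (exp 1 - 2) * x ^ 2 := by
  -- `exp z - 1 - z = ∑ z^(n+2)/(n+2)!`, and for `|x| ≤ 1` each term at `x` is at most
  -- `x²` times the one at `1`
  have tail (z : ℝ) : HasSum (fun n ↦ z ^ (n + 2) / (n + 2)!) (exp z - (1 + z)) := by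
    have h := exp_eq_exp_ℝ ▸ NormedSpace.expSeries_div_hasSum_exp z
    simpa [sum_range_succ, add_comm] using (hasSum_nat_add_iff' 2).mpr h
  have hterm (n : ℕ) : x ^ (n + 2) / (n + 2)! ≤ x ^ 2 * (1 ^ (n + 2) / (n + 2)!) := by
    have hxn : x ^ n ≤ 1 :=
      (le_abs_self _).trans (by simpa [abs_pow] using pow_le_one₀ (abs_nonneg x) hx)
    rw [one_pow, mul_one_div, pow_add, mul_comm]
    gcongr
    nlinarith [sq_nonneg x]
  linarith [hasSum_le hterm (tail x) ((tail 1).mul_left (x ^ 2))]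

theorem Real.exp_le_one_add_add_mul_sq_s17 {x : ℝ} (hx : x ≤ 1) :
    exp x ≤ 1 + x + (exp 1 - 2) * x ^ 2 := by
  rcases le_or_gt (-1) x with h | h
  · exact exp_le_one_add_add_mul_sq_of_abs_le_one (abs_le.mpr ⟨h, hx⟩)
  · -- as `e - 2 > 1/2` the quadratic decreases on `x ≤ -1`, staying above `e - 2 ≥ exp (-1)`
    have h₁ : exp (-1) ≤ exp 1 - 2 := by
      simpa using exp_le_one_add_add_mul_sq_of_abs_le_one (x := -1) (by norm_num)
    have he := exp_one_gt_d9
    nlinarith [exp_le_exp.mpr h.le,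
      mul_nonneg (by linarith : 0 ≤ -1 - x) (by linarith : 0 ≤ 1 - x)]

theorem mul_exp_rpow_div {x l a b : ℝ} (hx : 0 ≤ x) (ha : a ≠ 0) :
    (x * exp (-a * l)) ^ (b / a) = x ^ (b / a) * exp (-b * l) := by
  rw [mul_rpow hx (exp_pos _).le, ← exp_mul]
  congr 2
  field_simp

namespace KL

variable {n : ℕ}

theorem eq_sum (u v : Fin n → ℝ) : KL u v = ∑ i, (u i * log (u i / v i) - u i + v i) := by
  simp only [KL, sum_add_distrib, sum_sub_distrib]

theorem nonneg {u v : Fin n → ℝ} (hu : ∀ i, 0 < u i) (hv : ∀ i, 0 < v i) : 0 ≤ KL u v := by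
  rw [eq_sum]
  refine sum_nonneg fun i _ ↦ ?_
  have h := mul_le_mul_of_nonneg_left
    (one_sub_inv_le_log_of_pos (div_pos (hu i) (hv i))) (hu i).le
  rw [inv_div, mul_one_sub, mul_div_cancel₀ _ (hu i).ne'] at h
  linarith

theorem mul_exp_neg_le {y x L : Fin n → ℝ} {η : ℝ} (hy : ∀ i, 0 < y i) (hx : ∀ i, 0 < x i)
    (hL : ∀ i, -1 ≤ η * L i) :
    KL y (fun i ↦ x i * exp (-η * L i))
      ≤ KL y x - η * ∑ i, L i * x i + η * ∑ i, L i * y i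
        + (exp 1 - 2) * (η ^ 2 * ∑ i, x i * L i ^ 2) := by
  have hlog (i : Fin n) : log (y i / (x i * exp (-η * L i))) = log (y i / x i) + η * L i := by
    rw [div_mul_eq_div_div, log_div (div_pos (hy i) (hx i)).ne' (exp_ne_zero _), log_exp]
    ring
  have hexp (i : Fin n) : x i * exp (-η * L i)
      ≤ x i - η * (L i * x i) + (exp 1 - 2) * (η ^ 2 * (x i * L i ^ 2)) := by
    have h := exp_le_one_add_add_mul_sq_s17 (x := -η * L i) (by linarith [hL i])
    linarith [mul_le_mul_of_nonneg_left h (hx i).le]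
  rw [eq_sum, eq_sum]
  calc _ ≤ ∑ i, ((y i * log (y i / x i) - y i + x i) - η * (L i * x i) + η * (L i * y i)
          + (exp 1 - 2) * (η ^ 2 * (x i * L i ^ 2))) := by
        refine sum_le_sum fun i _ ↦ ?_
        rw [hlog]
        linarith [hexp i]
    _ = _ := by simp only [sum_add_distrib, sum_sub_distrib, mul_sum]

theorem rpow_mul_rpow_le {y a b : Fin n → ℝ} (hy : ∀ i, 0 < y i) (ha : ∀ i, 0 < a i)
    (hb : ∀ i, 0 < b i) {r : ℝ} (hr₀ : 0 ≤ r) (hr₁ : r ≤ 1) :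
    KL y (fun i ↦ a i ^ (1 - r) * b i ^ r) ≤ (1 - r) * KL y a + r * KL y b := by
  have hlog (i : Fin n) : log (y i / (a i ^ (1 - r) * b i ^ r))
      = (1 - r) * log (y i / a i) + r * log (y i / b i) := by
    have ha' := rpow_pos_of_pos (ha i) (1 - r)
    have hb' := rpow_pos_of_pos (hb i) r
    rw [log_div (hy i).ne' (mul_pos ha' hb').ne', log_mul ha'.ne' hb'.ne',
      log_rpow (ha i), log_rpow (hb i), log_div (hy i).ne' (ha i).ne',
      log_div (hy i).ne' (hb i).ne']
    ring
  have hgm (i : Fin n) : a i ^ (1 - r) * b i ^ r ≤ (1 - r) * a i + r * b i :=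
    geom_mean_le_arith_mean2_weighted (by linarith) hr₀ (ha i).le (hb i).le (by ring)
  rw [eq_sum, eq_sum, eq_sum, mul_sum, mul_sum, ← sum_add_distrib]
  refine sum_le_sum fun i _ ↦ ?_
  rw [hlog]
  linarith [hgm i]

theorem div_le_of_le_rpow_mul_rpow_add {y x₁ w x' : Fin n → ℝ} (hy : ∀ i, 0 < y i)
    (hx₁ : ∀ i, 0 < x₁ i) (hw : ∀ i, 0 < w i) {a b ε : ℝ} (hb : 0 < b) (hba : b ≤ a)
    (h : KL y x' ≤ KL y (fun i ↦ x₁ i ^ (1 - b / a) * w i ^ (b / a)) + ε) :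
    KL y x' / b ≤ KL y w / a + KL y x₁ / b - KL y x₁ / a + ε / b := by
  have ha := hb.trans_le hba
  have hmix := rpow_mul_rpow_le hy hx₁ hw (div_nonneg hb.le ha.le) ((div_le_one ha).mpr hba)
  calc KL y x' / b ≤ ((1 - b / a) * KL y x₁ + b / a * KL y w + ε) / b := by
        gcongr
        linarith
    _ = _ := by field_simp; ring

end KL

theorem sum_le_of_potential {T : ℕ} (hT : 1 ≤ T) {a q e Φ Ψ B : ℕ → ℝ} (hinit : Ψ 1 ≤ B 1)
    (hplay : ∀ t, 1 ≤ t → t ≤ T → Φ t ≤ Ψ t - a t + q t)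
    (hupdate : ∀ t, 1 ≤ t → t < T → Ψ (t + 1) ≤ Φ t + B (t + 1) - B t + e t)
    (hfinal : 0 ≤ Φ T) :
    ∑ t ∈ Icc 1 T, a t ≤ B T + ∑ t ∈ Icc 1 (T - 1), e t + ∑ t ∈ Icc 1 T, q t := by
  suffices h : ∀ m, 1 ≤ m → m ≤ T →
      ∑ t ∈ Icc 1 m, a t + Φ m ≤ B m + ∑ t ∈ Ico 1 m, e t + ∑ t ∈ Icc 1 m, q t by
    have hTmin : ¬IsMin T := by rw [isMin_iff_eq_bot, Nat.bot_eq_zero]; omega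
    rw [Icc_sub_one_right_eq_Ico_of_not_isMin hTmin]
    linarith [h T hT le_rfl]
  intro m hm
  induction m, hm using Nat.le_induction with
  | base =>
    intro h1T
    simp only [Icc_self, sum_singleton, Ico_self, sum_empty, add_zero]
    linarith [hplay 1 le_rfl h1T]
  | succ m hm ih =>
    intro hmT
    rw [sum_Icc_succ_top (by omega), sum_Ico_succ_top hm, sum_Icc_succ_top (by omega)]
    linarith [ih (by omega), hupdate m hm hmT, hplay (m + 1) (by omega) hmT]

theorem exp_regret_bound_general (n : ℕ) (P : Set (Fin n → ℝ))
    (hPpos : ∀ z ∈ P, ∀ i, 0 < z i)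
    (T : ℕ) (hT : 1 ≤ T)
    (x : ℕ → (Fin n → ℝ)) (L : ℕ → (Fin n → ℝ)) (η : ℕ → ℝ) (ε : ℕ → ℝ)
    (hx₁ : x 1 ∈ P)
    (hxP : ∀ t, 1 ≤ t → t ≤ T → x t ∈ P)
    (hηpos : ∀ t, 1 ≤ t → t ≤ T → 0 < η t)
    (hηmono : ∀ t, 1 ≤ t → t < T → η (t + 1) ≤ η t)
    (hL : ∀ t, 1 ≤ t → t ≤ T → ∀ i, -1 ≤ η t * L t i)
    (hproj : ∀ t, 1 ≤ t → t < T → ∀ z ∈ P,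
      KL z (x (t + 1))
        ≤ KL z (fun i =>
            x 1 i ^ (1 - η (t + 1) / η t) * x t i ^ (η (t + 1) / η t)
              * Real.exp (-(η (t + 1)) * L t i)) + ε t) :
    ∀ y ∈ P,
      ∑ t ∈ Finset.Icc 1 T, (∑ i, L t i * x t i)
          - ∑ t ∈ Finset.Icc 1 T, (∑ i, L t i * y i)
        ≤ KL y (x 1) / η T
          + ∑ t ∈ Finset.Icc 1 (T - 1), ε t / η (t + 1)
          + (Real.exp 1 - 2) * ∑ t ∈ Finset.Icc 1 T, η t * ∑ i, x t i * (L t i) ^ 2 := by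
  intro y hy
  have hy₀ := hPpos y hy
  have hw (t : ℕ) (h₁ : 1 ≤ t) (h₂ : t ≤ T) (i : Fin n) : 0 < x t i * exp (-η t * L t i) :=
    mul_pos (hPpos _ (hxP t h₁ h₂) i) (exp_pos _)
  rw [← sum_sub_distrib, mul_sum]
  refine sum_le_of_potential hT (Ψ := fun t ↦ KL y (x t) / η t)
    (Φ := fun t ↦ KL y (fun i ↦ x t i * exp (-η t * L t i)) / η t)
    (B := fun t ↦ KL y (x 1) / η t) le_rfl (fun t h₁ h₂ ↦ ?_) (fun t h₁ h₂ ↦ ?_)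
    (div_nonneg (KL.nonneg hy₀ (hw T hT le_rfl)) (hηpos T hT le_rfl).le)
  · have hη := hηpos t h₁ h₂
    rw [div_le_iff₀ hη]
    refine (KL.mul_exp_neg_le hy₀ (hPpos _ (hxP t h₁ h₂)) (hL t h₁ h₂)).trans_eq ?_
    field_simp
    ring
  · have hηt := hηpos t h₁ h₂.le
    refine KL.div_le_of_le_rpow_mul_rpow_add hy₀ (hPpos _ hx₁) (hw t h₁ h₂.le)
      (hηpos (t + 1) (by omega) h₂) (hηmono t h₁ h₂) ?_
    convert hproj t h₁ h₂ y hy using 4 with i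
    rw [mul_exp_rpow_div (hPpos _ (hxP t h₁ h₂.le) i).le hηt.ne', mul_assoc]

/-- Regret bound for generalized EXP with time-varying parameters and
approximate Bregman (KL) projections onto a convex set `P ⊆ ℝⁿ_{>0}`. -/
theorem exp_regret_bound (n : ℕ) (P : Set (Fin n → ℝ)) (hPconv : Convex ℝ P)
    (hPpos : ∀ z ∈ P, ∀ i, 0 < z i)
    (T : ℕ) (hT : 1 ≤ T)
    (x : ℕ → (Fin n → ℝ)) (L : ℕ → (Fin n → ℝ)) (η : ℕ → ℝ) (ε : ℕ → ℝ)
    (hx₁ : x 1 ∈ P)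
    (hxP : ∀ t, 1 ≤ t → t ≤ T → x t ∈ P)
    (hηpos : ∀ t, 1 ≤ t → t ≤ T → 0 < η t)
    (hηmono : ∀ t, 1 ≤ t → t < T → η (t + 1) ≤ η t)
    (hεpos : ∀ t, 1 ≤ t → t < T → 0 ≤ ε t)
    (hL : ∀ t, 1 ≤ t → t ≤ T → ∀ i, -1 ≤ η t * L t i)
    (hproj : ∀ t, 1 ≤ t → t < T → ∀ z ∈ P,
      KL z (x (t + 1))
        ≤ KL z (fun i =>
            x 1 i ^ (1 - η (t + 1) / η t) * x t i ^ (η (t + 1) / η t)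
              * Real.exp (-(η (t + 1)) * L t i)) + ε t) :
    ∀ y ∈ P,
      ∑ t ∈ Finset.Icc 1 T, (∑ i, L t i * x t i)
          - ∑ t ∈ Finset.Icc 1 T, (∑ i, L t i * y i)
        ≤ KL y (x 1) / η T
          + ∑ t ∈ Finset.Icc 1 (T - 1), ε t / η (t + 1)
          + (Real.exp 1 - 2) * ∑ t ∈ Finset.Icc 1 T, η t * ∑ i, x t i * (L t i) ^ 2 :=
  exp_regret_bound_general n P hPpos T hT x L η ε hx₁ hxP hηpos hηmono hL hproj
end
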